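/- arXiv:0710.3001 — 3 statements merged into one kernel-verified Lean document; each statement's English description precedes it below -/
import Mathlib

section
/- Let M be a positive integer. The map q ↦ (α_i), where (α_i) denotes the quasi-greedy expansion of 1 in base q, is a strictly increasing one-to-one correspondence between the interval (1, M+1] and the set of infinite sequences (α_i) with digits in {0,...,M} satisfying α_{n+1}α_{n+2}... ≤ α_1α_2... (lexicographically) whenever α_n < M. (Strictly increasing means: if 1 < q < q' ≤ M+1, the quasi-greedy expansion of 1 in base q is lexicographically smaller than that in base q'.) -/
/-- Strict lexicographic order on digit sequences (indexed from 0). -/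
def LexLt (a b : ℕ → ℕ) : Prop :=
  ∃ n, (∀ k, k < n → a k = b k) ∧ a n < b n

/-- Non-strict lexicographic order on digit sequences. -/
def LexLe (a b : ℕ → ℕ) : Prop :=
  LexLt a b ∨ a = b

open Classical in
/-- The next quasi-greedy digit: the largest integer `m ≤ M` with `s + m / q ^ (n+1) < x`,
where `s` is the value of the previously chosen digits. -/
noncomputable def qgDigit (M : ℕ) (q x s : ℝ) (n : ℕ) : ℕ :=
  Nat.findGreatest (fun m => s + (m : ℝ) / q ^ (n + 1) < x) M

/-- Partial sums of the quasi-greedy expansion of `x` in base `q` with digits `≤ M`. -/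
noncomputable def qgSum (M : ℕ) (q x : ℝ) : ℕ → ℝ
  | 0 => 0
  | n + 1 => qgSum M q x n + (qgDigit M q x (qgSum M q x n) n : ℝ) / q ^ (n + 1)

/-- `quasiGreedy M q x n` is the `(n+1)`-st digit (so indexing starts at 0) of the
quasi-greedy expansion of `x` in base `q` with digits in `{0, ..., M}`:
recursively, it is the largest integer `a_n ≤ M` with `a_1/q + ⋯ + a_n/q^n < x`. -/
noncomputable def quasiGreedy (M : ℕ) (q x : ℝ) (n : ℕ) : ℕ :=
  qgDigit M q x (qgSum M q x n) n

/-! The partial sums `s_n` of the quasi-greedy expansion of `x` stay below `x` and, for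
`x ≤ M / (q - 1)`, converge to it; the digits after the first `n` form the quasi-greedy expansion
of the remainder `q ^ n * (x - s_n)`. Comparing first differing digits, the expansion is monotone
in `q` and in `x`, and strictly so in `q` because the same digits sum to strictly less in a larger
base. If `α_n < M`, maximality of the digit `α_n` bounds the remainder after `n + 1` digits by `1`,
which gives the lexicographic condition. Conversely, an admissible `α` has value `1` in some base
`q ∈ (1, M + 1]` by the intermediate value theorem; by induction over prefixes, the lexicographic
condition bounds the value of every tail `α_{n+1} α_{n+2} …` with `α_n < M` by `1`, which is exactly
the maximality that characterizes the quasi-greedy digits. -/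

open Filter Topology Finset

theorem lexLe_iff_toLex_le {a b : ℕ → ℕ} : LexLe a b ↔ toLex a ≤ toLex b := by
  rw [le_iff_lt_or_eq, toLex_inj]
  rfl

theorem toLex_le_of_forall_agree_imp_le {a b : ℕ → ℕ}
    (h : ∀ n, (∀ k < n, a k = b k) → a n ≤ b n) : toLex a ≤ toLex b :=
  not_lt.1 fun ⟨n, hpre, hlt⟩ => (h n fun k hk => (hpre k hk).symm).not_gt hlt

theorem one_le_natCast_div_sub_one {M : ℕ} {q : ℝ} (hq : 1 < q) (hqM : q ≤ M + 1) :
    1 ≤ (M : ℝ) / (q - 1) :=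
  (one_le_div (by linarith)).2 (by linarith)

namespace Expansion

noncomputable def partialValue (c : ℕ → ℕ) (q : ℝ) (n : ℕ) : ℝ :=
  ∑ i ∈ range n, (c i : ℝ) / q ^ (i + 1)

noncomputable def value (c : ℕ → ℕ) (q : ℝ) : ℝ :=
  ∑' i, (c i : ℝ) / q ^ (i + 1)

variable {M : ℕ} {c d : ℕ → ℕ} {q : ℝ}

theorem partialValue_zero (c : ℕ → ℕ) (q : ℝ) : partialValue c q 0 = 0 :=
  sum_range_zero _

theorem partialValue_succ (c : ℕ → ℕ) (q : ℝ) (n : ℕ) :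
    partialValue c q (n + 1) = partialValue c q n + c n / q ^ (n + 1) :=
  sum_range_succ _ _

theorem div_pow_succ_div_pow (a : ℝ) (m i : ℕ) :
    a / q ^ (i + 1) / q ^ m = a / q ^ (m + i + 1) := by
  rw [div_div, ← pow_add]
  ring_nf

theorem partialValue_add (c : ℕ → ℕ) (m k : ℕ) :
    partialValue c q (m + k) =
      partialValue c q m + partialValue (fun i => c (m + i)) q k / q ^ m := by
  simp only [partialValue, sum_range_add, sum_div, div_pow_succ_div_pow]

theorem partialValue_congr {n : ℕ} (h : ∀ k < n, c k = d k) :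
    partialValue c q n = partialValue d q n :=
  sum_congr rfl fun k hk => by rw [h k (mem_range.1 hk)]

theorem partialValue_mono (hq : 0 ≤ q) (c : ℕ → ℕ) : Monotone (partialValue c q) :=
  fun _ _ hmn => sum_le_sum_of_subset_of_nonneg (range_subset_range.2 hmn) fun _ _ _ => by
    positivity

theorem partialValue_le_of_base_le {q' : ℝ} (hq : 0 < q) (hqq' : q ≤ q') (c : ℕ → ℕ) (n : ℕ) :
    partialValue c q' n ≤ partialValue c q n :=
  sum_le_sum fun _ _ => div_le_div_of_nonneg_left (Nat.cast_nonneg _) (pow_pos hq _)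
    (pow_le_pow_left₀ hq.le hqq' _)

theorem hasSum_div_pow_succ (hq : 1 < q) (a : ℝ) :
    HasSum (fun i : ℕ => a / q ^ (i + 1)) (a / (q - 1)) := by
  have hq0 : q ≠ 0 := by positivity
  have hq1 : q - 1 ≠ 0 := by linarith
  have hterm : (fun i : ℕ => a / q ^ (i + 1)) = fun i => a / q * q⁻¹ ^ i := by
    ext i
    rw [inv_pow, pow_succ]
    field_simp
  have hsum : a / (q - 1) = a / q * (1 - q⁻¹)⁻¹ := by
    field_simp
  rw [hterm, hsum]
  exact (hasSum_geometric_of_lt_one (by positivity) (inv_lt_one_of_one_lt₀ hq)).mul_left _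

theorem summable (hq : 1 < q) (hc : ∀ i, c i ≤ M) :
    Summable fun i => (c i : ℝ) / q ^ (i + 1) :=
  (hasSum_div_pow_succ hq M).summable.of_nonneg_of_le (fun _ => by positivity) fun i =>
    div_le_div_of_nonneg_right (by exact_mod_cast hc i) (by positivity)

theorem value_le (hq : 1 < q) (hc : ∀ i, c i ≤ M) : value c q ≤ M / (q - 1) :=
  hasSum_le (fun i => div_le_div_of_nonneg_right (by exact_mod_cast hc i) (by positivity))
    (summable hq hc).hasSum (hasSum_div_pow_succ hq M)

theorem value_eq_partialValue_add (hq : 1 < q) (hc : ∀ i, c i ≤ M) (n : ℕ) :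
    value c q = partialValue c q n + value (fun i => c (n + i)) q / q ^ n := by
  rw [value, ← (summable hq hc).sum_add_tsum_nat_add n, value, ← tsum_div_const]
  congr 1
  refine tsum_congr fun i => ?_
  rw [div_pow_succ_div_pow, add_comm i n]

theorem partialValue_lt_value (hq : 1 < q) (hc : ∀ i, c i ≤ M) (hinf : {n | c n ≠ 0}.Infinite)
    (n : ℕ) : partialValue c q n < value c q := by
  rw [value_eq_partialValue_add hq hc n]
  obtain ⟨i, hi, hni⟩ := hinf.exists_gt n
  have hci : 0 < c (n + (i - n)) := by rw [Nat.add_sub_cancel' hni.le]; exact Nat.pos_of_ne_zero hi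
  have htail : 0 < value (fun i => c (n + i)) q :=
    (summable hq fun i => hc (n + i)).tsum_pos (fun _ => by positivity) (i - n)
      (div_pos (by exact_mod_cast hci) (by positivity))
  have : 0 < q ^ n := by positivity
  linarith [div_pos htail this]

theorem continuousOn_value {q₀ : ℝ} (hq₀ : 1 < q₀) (hc : ∀ i, c i ≤ M) :
    ContinuousOn (value c) (Set.Ici q₀) := by
  refine continuousOn_tsum (u := fun i => M / q₀ ^ (i + 1))
    (fun i => continuousOn_const.div (continuousOn_pow _) fun q hq => ?_)
    (hasSum_div_pow_succ hq₀ M).summable fun i q hq => ?_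
  · have : 0 < q := by linarith [Set.mem_Ici.1 hq]
    positivity
  · have hq₀' : 0 < q₀ := by linarith
    have : 0 < q := by linarith [Set.mem_Ici.1 hq]
    rw [Real.norm_of_nonneg (by positivity)]
    exact div_le_div₀ (Nat.cast_nonneg _) (by exact_mod_cast hc i) (by positivity)
      (pow_le_pow_left₀ hq₀'.le hq _)

theorem exists_one_le_value (hc : ∀ i, c i ≤ M) (hinf : {n | c n ≠ 0}.Infinite) :
    ∃ q₀ ∈ Set.Ioo (1 : ℝ) 2, 1 ≤ value c q₀ := by
  -- two nonzero digits are worth at least `2` in base `1`, hence more than `1` in bases near `1`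
  obtain ⟨F, hF, hcard⟩ := hinf.exists_subset_card_eq 2
  have hF1 : 1 < ∑ i ∈ F, (c i : ℝ) / 1 ^ (i + 1) := by
    have := card_nsmul_le_sum F (fun i => (c i : ℝ)) 1 fun i hi => by
      exact_mod_cast Nat.one_le_iff_ne_zero.2 (hF hi)
    rw [hcard, two_nsmul] at this
    simp only [one_pow, div_one]
    linarith
  have hcont : ContinuousAt (fun q : ℝ => ∑ i ∈ F, (c i : ℝ) / q ^ (i + 1)) 1 := by
    fun_prop (disch := norm_num)
  obtain ⟨q₀, hlt, hq₀⟩ := (((hcont.eventually (lt_mem_nhds hF1)).filter_mono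
    nhdsWithin_le_nhds).and (Ioo_mem_nhdsGT one_lt_two)).exists
  have : 0 < q₀ := by linarith [hq₀.1]
  exact ⟨q₀, hq₀, hlt.le.trans ((summable hq₀.1 hc).sum_le_tsum F fun _ _ => by positivity)⟩

theorem exists_value_eq_one (hc : ∀ i, c i ≤ M) (hinf : {n | c n ≠ 0}.Infinite) :
    ∃ q ∈ Set.Ioc (1 : ℝ) (M + 1), value c q = 1 := by
  obtain ⟨q₀, ⟨hq₀, hq₀2⟩, hv⟩ := exists_one_le_value hc hinf
  have hM : (1 : ℝ) ≤ M := by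
    obtain ⟨i, hi⟩ := hinf.nonempty
    exact_mod_cast (Nat.one_le_iff_ne_zero.2 hi).trans (hc i)
  have hvM : value c (M + 1) ≤ 1 := by
    have := value_le (by linarith) hc (q := M + 1)
    rwa [add_sub_cancel_right, div_self (by positivity)] at this
  obtain ⟨q, hq, hval⟩ := intermediate_value_Icc' (by linarith : q₀ ≤ M + 1)
    ((continuousOn_value hq₀ hc).mono Set.Icc_subset_Ici_self) ⟨hvM, hv⟩
  exact ⟨q, ⟨hq₀.trans_le hq.1, hq.2⟩, hval⟩

theorem partialValue_shift_le (hq : 0 < q) (hc : ∀ i, c i ≤ M)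
    (hlex : ∀ n, c n < M → toLex (fun i => c (n + 1 + i)) ≤ toLex c)
    (hle : ∀ k, partialValue c q k ≤ 1) (k : ℕ) :
    ∀ n, c n < M → partialValue (fun i => c (n + 1 + i)) q k ≤ partialValue c q k := by
  -- At the first index `j` where the tail drops below `c`, its digit is at most `c j - 1`, and what
  -- follows is again a tail after a digit `< M`, worth at most `1 / q ^ (j + 1)` by induction.
  induction k using Nat.strong_induction_on with | _ k ih => ?_
  intro n hn
  rcases (hlex n hn).lt_or_eq with ⟨j, hpre, hj⟩ | heq
  · replace hpre : ∀ i < j, c (n + 1 + i) = c i := hpre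
    replace hj : c (n + 1 + j) < c j := hj
    rcases le_or_gt k j with hkj | hjk
    · exact (partialValue_congr fun i hi => hpre i (hi.trans_le hkj)).le
    obtain ⟨r, rfl⟩ : ∃ r, k = j + 1 + r := ⟨k - (j + 1), by omega⟩
    have htail := ih r (by omega) (n + 1 + j) (hj.trans_le (hc j))
    calc partialValue (fun i => c (n + 1 + i)) q (j + 1 + r)
        = partialValue c q j + c (n + 1 + j) / q ^ (j + 1)
            + partialValue (fun i => c (n + 1 + j + 1 + i)) q r / q ^ (j + 1) := by
          rw [partialValue_add, partialValue_succ, partialValue_congr hpre]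
          simp only [add_assoc]
      _ ≤ partialValue c q j + (c (n + 1 + j) + 1) / q ^ (j + 1) := by
          rw [add_div, ← add_assoc]
          gcongr
          exact htail.trans (hle r)
      _ ≤ partialValue c q (j + 1) := by
          rw [partialValue_succ]
          gcongr
          exact_mod_cast hj
      _ ≤ partialValue c q (j + 1 + r) := partialValue_mono hq.le c (by omega)
  · rw [toLex_inj.1 heq]

theorem value_shift_le_one (hq : 1 < q) (hc : ∀ i, c i ≤ M) (hinf : {n | c n ≠ 0}.Infinite)
    (hlex : ∀ n, c n < M → toLex (fun i => c (n + 1 + i)) ≤ toLex c) (hval : value c q = 1)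
    {n : ℕ} (hn : c n < M) : value (fun i => c (n + 1 + i)) q ≤ 1 := by
  have hle k : partialValue c q k ≤ 1 := hval ▸ (partialValue_lt_value hq hc hinf k).le
  exact Real.tsum_le_of_sum_range_le (fun _ => by positivity) fun k =>
    (partialValue_shift_le (by linarith) hc hlex hle k n hn).trans (hle k)

end Expansion

open Expansion

section QuasiGreedy

variable {M : ℕ} {q x : ℝ}

theorem quasiGreedy_le (M : ℕ) (q x : ℝ) (n : ℕ) : quasiGreedy M q x n ≤ M :=
  Nat.findGreatest_le M

theorem qgSum_succ (M : ℕ) (q x : ℝ) (n : ℕ) :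
    qgSum M q x (n + 1) = qgSum M q x n + quasiGreedy M q x n / q ^ (n + 1) :=
  rfl

theorem qgSum_eq_partialValue (M : ℕ) (q x : ℝ) (n : ℕ) :
    qgSum M q x n = partialValue (quasiGreedy M q x) q n := by
  induction n with
  | zero => exact (partialValue_zero _ _).symm
  | succ n ih => rw [qgSum_succ, ih, partialValue_succ]

theorem qgSum_lt (hx : 0 < x) (n : ℕ) : qgSum M q x n < x := by
  induction n with
  | zero => exact hx
  | succ n ih =>
    rw [qgSum_succ]
    by_cases h : quasiGreedy M q x n = 0
    · simpa [h] using ih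
    · exact Nat.findGreatest_of_ne_zero rfl h

theorem sub_qgSum_succ_le {n : ℕ} (h : quasiGreedy M q x n < M) :
    x - qgSum M q x (n + 1) ≤ 1 / q ^ (n + 1) := by
  have hmax := Nat.findGreatest_is_greatest (Nat.lt_succ_self (quasiGreedy M q x n)) h
  push Not at hmax
  push_cast [add_div] at hmax
  rw [qgSum_succ]
  linarith

theorem sub_qgSum_le (hq : 1 < q) (hqM : q ≤ M + 1) (hx : x ≤ M / (q - 1)) (n : ℕ) :
    x - qgSum M q x n ≤ M / (q - 1) / q ^ n := by
  induction n with
  | zero => simpa [qgSum] using hx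
  | succ n ih =>
    rcases (quasiGreedy_le M q x n).lt_or_eq with h | h
    · calc x - qgSum M q x (n + 1) ≤ 1 / q ^ (n + 1) := sub_qgSum_succ_le h
        _ ≤ M / (q - 1) / q ^ (n + 1) := by
          gcongr
          exact one_le_natCast_div_sub_one hq hqM
    · have hq0 : q ≠ 0 := by positivity
      have hq1 : q - 1 ≠ 0 := by linarith
      calc x - qgSum M q x (n + 1) = x - qgSum M q x n - M / q ^ (n + 1) := by
            rw [qgSum_succ, h]
            ring
        _ ≤ M / (q - 1) / q ^ n - M / q ^ (n + 1) := by linarith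
        _ = M / (q - 1) / q ^ (n + 1) := by
            field_simp
            ring

theorem hasSum_quasiGreedy (hq : 1 < q) (hqM : q ≤ M + 1) (hx₀ : 0 < x) (hx : x ≤ M / (q - 1)) :
    HasSum (fun i => (quasiGreedy M q x i : ℝ) / q ^ (i + 1)) x := by
  rw [hasSum_iff_tendsto_nat_of_nonneg (fun _ => by positivity)]
  have hlim : Tendsto (fun n => M / (q - 1) / q ^ n) atTop (𝓝 0) :=
    tendsto_const_nhds.div_atTop (tendsto_pow_atTop_atTop_of_one_lt hq)
  have h := (squeeze_zero (fun n => (sub_pos.2 (qgSum_lt hx₀ n)).le)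
    (sub_qgSum_le hq hqM hx) hlim).const_sub x
  simp only [sub_sub_cancel, sub_zero, qgSum_eq_partialValue] at h
  exact h

theorem infinite_quasiGreedy_ne_zero (hq : 1 < q) (hqM : q ≤ M + 1) (hx₀ : 0 < x)
    (hx : x ≤ M / (q - 1)) : {n | quasiGreedy M q x n ≠ 0}.Infinite := by
  intro hfin
  obtain ⟨N, hN⟩ := hfin.bddAbove
  have hfinsum :
      HasSum (fun i => (quasiGreedy M q x i : ℝ) / q ^ (i + 1)) (qgSum M q x (N + 1)) := by
    rw [qgSum_eq_partialValue]
    refine hasSum_sum_of_ne_finset_zero fun i hi => ?_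
    have : quasiGreedy M q x i = 0 := by
      by_contra h
      exact hi (mem_range.2 (Nat.lt_succ_of_le (hN h)))
    simp [this]
  exact (qgSum_lt hx₀ (N + 1)).ne ((hasSum_quasiGreedy hq hqM hx₀ hx).unique hfinsum).symm

theorem qgDigit_le_qgDigit {q' x' s s' : ℝ} (hq : 0 < q) (hqq' : q ≤ q') (h : x - s ≤ x' - s')
    (n : ℕ) : qgDigit M q x s n ≤ qgDigit M q' x' s' n := by
  refine Nat.findGreatest_mono (fun m hm => ?_) le_rfl
  have : (m : ℝ) / q' ^ (n + 1) ≤ m / q ^ (n + 1) :=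
    div_le_div_of_nonneg_left (Nat.cast_nonneg _) (pow_pos hq _) (pow_le_pow_left₀ hq.le hqq' _)
  linarith

theorem toLex_quasiGreedy_mono {q' x' : ℝ} (hq : 0 < q) (hqq' : q ≤ q') (hxx' : x ≤ x') :
    toLex (quasiGreedy M q x) ≤ toLex (quasiGreedy M q' x') :=
  toLex_le_of_forall_agree_imp_le fun n hpre => by
    have hs : qgSum M q' x' n ≤ qgSum M q x n := by
      rw [qgSum_eq_partialValue, qgSum_eq_partialValue,
        partialValue_congr fun k hk => (hpre k hk).symm]
      exact partialValue_le_of_base_le hq hqq' _ _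
    exact qgDigit_le_qgDigit hq hqq' (by linarith) n

theorem toLex_quasiGreedy_lt {q' : ℝ} (hq : 1 < q) (hqq' : q < q') (hq'M : q' ≤ M + 1)
    (hx₀ : 0 < x) (hx : x ≤ M / (q' - 1)) :
    toLex (quasiGreedy M q x) < toLex (quasiGreedy M q' x) := by
  have hq' : 1 < q' := hq.trans hqq'
  have hxq : x ≤ M / (q - 1) :=
    hx.trans (div_le_div_of_nonneg_left (Nat.cast_nonneg _) (by linarith) (by linarith))
  refine (toLex_quasiGreedy_mono (by linarith) hqq'.le le_rfl).lt_of_ne fun heq => ?_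
  obtain ⟨i, hi⟩ := (infinite_quasiGreedy_ne_zero hq (by linarith) hx₀ hxq).nonempty
  have hsum' := hasSum_quasiGreedy hq' hq'M hx₀ hx
  rw [← toLex_inj.1 heq] at hsum'
  -- with the same digits, the larger base gives a strictly smaller sum
  refine lt_irrefl x (hasSum_lt (i := i) (fun j => ?_) ?_ hsum'
    (hasSum_quasiGreedy hq (by linarith) hx₀ hxq))
  · exact div_le_div_of_nonneg_left (Nat.cast_nonneg _) (by positivity)
      (pow_le_pow_left₀ (by linarith) hqq'.le _)
  · exact div_lt_div_of_pos_left (Nat.cast_pos.2 (Nat.pos_of_ne_zero hi)) (by positivity)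
      (pow_lt_pow_left₀ hqq' (by linarith) (Nat.succ_ne_zero i))

theorem qgDigit_shift (hq : 0 < q) (x s t : ℝ) (n i : ℕ) :
    qgDigit M q (q ^ n * (x - s)) (q ^ n * (t - s)) i = qgDigit M q x t (n + i) := by
  unfold qgDigit
  congr 1
  ext m
  have hpow : 0 < q ^ n := by positivity
  have : q ^ n * (t - s) + m / q ^ (i + 1) = q ^ n * (t + m / q ^ (n + i + 1) - s) := by
    field_simp
    ring
  rw [this, mul_lt_mul_iff_right₀ hpow, sub_lt_sub_iff_right]

theorem qgSum_shift (hq : 0 < q) (x : ℝ) (n i : ℕ) :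
    qgSum M q (q ^ n * (x - qgSum M q x n)) i = q ^ n * (qgSum M q x (n + i) - qgSum M q x n) := by
  induction i with
  | zero => simp [qgSum]
  | succ i ih =>
    have hd : quasiGreedy M q (q ^ n * (x - qgSum M q x n)) i = quasiGreedy M q x (n + i) := by
      rw [quasiGreedy, ih, qgDigit_shift hq]
      rfl
    rw [qgSum_succ, ih, hd, ← add_assoc, qgSum_succ]
    field_simp
    ring

theorem quasiGreedy_shift (hq : 0 < q) (x : ℝ) (n : ℕ) :
    quasiGreedy M q (q ^ n * (x - qgSum M q x n)) = fun i => quasiGreedy M q x (n + i) :=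
  funext fun i => by
    rw [quasiGreedy, qgSum_shift hq, qgDigit_shift hq]
    rfl

theorem toLex_shift_quasiGreedy_one_le (hq : 1 < q) {n : ℕ} (hn : quasiGreedy M q 1 n < M) :
    toLex (fun i => quasiGreedy M q 1 (n + 1 + i)) ≤ toLex (quasiGreedy M q 1) := by
  have hq₀ : 0 < q := by linarith
  rw [← quasiGreedy_shift hq₀ 1 (n + 1)]
  refine toLex_quasiGreedy_mono hq₀ le_rfl ?_
  calc q ^ (n + 1) * (1 - qgSum M q 1 (n + 1)) ≤ q ^ (n + 1) * (1 / q ^ (n + 1)) := by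
        gcongr
        exact sub_qgSum_succ_le hn
    _ = 1 := mul_one_div_cancel (by positivity)

theorem quasiGreedy_eq_of_maximal {c : ℕ → ℕ} (hq : 0 ≤ q) (hc : ∀ n, c n ≤ M)
    (hlt : ∀ n, partialValue c q (n + 1) < x)
    (hmax : ∀ n, c n < M → x ≤ partialValue c q n + (c n + 1) / q ^ (n + 1)) :
    quasiGreedy M q x = c := by
  funext n
  induction n using Nat.strong_induction_on with | _ n ih => ?_
  have hs : qgSum M q x n = partialValue c q n :=
    (qgSum_eq_partialValue M q x n).trans (partialValue_congr ih)
  rw [quasiGreedy, hs, qgDigit, Nat.findGreatest_eq_iff]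
  refine ⟨hc n, fun _ => by rw [← partialValue_succ]; exact hlt n, fun k hk hkM hkx => ?_⟩
  have hx := hmax n (hk.trans_le hkM)
  have : ((c n : ℝ) + 1) / q ^ (n + 1) ≤ k / q ^ (n + 1) := by
    gcongr
    exact_mod_cast hk
  linarith

theorem quasiGreedy_eq_of_value_eq_one {c : ℕ → ℕ} (hq : 1 < q) (hc : ∀ i, c i ≤ M)
    (hinf : {n | c n ≠ 0}.Infinite)
    (hlex : ∀ n, c n < M → toLex (fun i => c (n + 1 + i)) ≤ toLex c) (hval : value c q = 1) :
    quasiGreedy M q 1 = c := by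
  refine quasiGreedy_eq_of_maximal (by linarith) hc
    (fun n => hval ▸ partialValue_lt_value hq hc hinf (n + 1)) fun n hn => ?_
  have hsplit := value_eq_partialValue_add hq hc (n + 1)
  rw [hval, partialValue_succ] at hsplit
  calc (1 : ℝ) = _ := hsplit
    _ ≤ partialValue c q n + c n / q ^ (n + 1) + 1 / q ^ (n + 1) := by
        gcongr
        exact value_shift_le_one hq hc hinf hlex hval hn
    _ = _ := by ring

end QuasiGreedy

theorem strictMonoOn_quasiGreedy_one (M : ℕ) :
    StrictMonoOn (fun q : ℝ => toLex (quasiGreedy M q 1)) (Set.Ioc 1 (M + 1)) :=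
  fun _ hq _ hq' hqq' => toLex_quasiGreedy_lt hq.1 hqq' hq'.2 one_pos
    (one_le_natCast_div_sub_one hq'.1 hq'.2)

theorem quasiGreedy_one_bijection_general (M : ℕ) :
    (∀ q q' : ℝ, 1 < q → q < q' → q' ≤ (M : ℝ) + 1 →
      LexLt (quasiGreedy M q 1) (quasiGreedy M q' 1)) ∧
    Set.BijOn (fun q : ℝ => quasiGreedy M q 1) (Set.Ioc 1 ((M : ℝ) + 1))
      {α : ℕ → ℕ | (∀ i, α i ≤ M) ∧ {n | α n ≠ 0}.Infinite ∧
        ∀ n, α n < M → LexLe (fun i => α (n + 1 + i)) α} := by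
  have hmono := strictMonoOn_quasiGreedy_one M
  refine ⟨fun q q' hq hqq' hq'M => hmono ⟨hq, by linarith⟩ ⟨hq.trans hqq', hq'M⟩ hqq', ?_, ?_, ?_⟩
  · rintro q ⟨hq, hqM⟩
    exact ⟨quasiGreedy_le M q 1,
      infinite_quasiGreedy_ne_zero hq hqM one_pos (one_le_natCast_div_sub_one hq hqM),
      fun n hn => lexLe_iff_toLex_le.2 (toLex_shift_quasiGreedy_one_le hq hn)⟩
  · exact Set.InjOn.of_comp (g := toLex) hmono.injOn
  · rintro c ⟨hc, hinf, hlex⟩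
    obtain ⟨q, hq, hval⟩ := exists_value_eq_one hc hinf
    exact ⟨q, hq, quasiGreedy_eq_of_value_eq_one hq.1 hc hinf
      (fun n hn => lexLe_iff_toLex_le.1 (hlex n hn)) hval⟩

/-- Theorem 2.2 (a): `q ↦ (α_i)`, the quasi-greedy expansion of `1` in base `q`, is a
strictly increasing one-to-one correspondence between `(1, M+1]` and the set of infinite
sequences with digits in `{0,…,M}` satisfying `α_{n+1}α_{n+2}… ≤ α_1α_2…` whenever `α_n < M`. -/
theorem quasiGreedy_one_bijection (M : ℕ) (hM : 0 < M) :
    (∀ q q' : ℝ, 1 < q → q < q' → q' ≤ (M : ℝ) + 1 →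
      LexLt (quasiGreedy M q 1) (quasiGreedy M q' 1)) ∧
    Set.BijOn (fun q : ℝ => quasiGreedy M q 1) (Set.Ioc 1 ((M : ℝ) + 1))
      {α : ℕ → ℕ | (∀ i, α i ≤ M) ∧ {n | α n ≠ 0}.Infinite ∧
        ∀ n, α n < M → LexLe (fun i => α (n + 1 + i)) α} :=
  quasiGreedy_one_bijection_general M
end

section
/- Let M be a positive integer, q > 1 a real number, and let (α_i) be an arbitrary expansion of 1 (i.e., a sequence with digits in {0,...,M} and Σ α_i q^{−i} = 1). If an infinite sequence (a_i) with digits in {0,...,M} satisfies a_{n+1}a_{n+2}... ≤ α_1α_2... (lexicographically) whenever a_n < M, then (a_i) is the quasi-greedy expansion of x := Σ_{i≥1} a_i q^{−i}. -/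
open Finset

noncomputable def expansionValue (q : ℝ) (b : ℕ → ℕ) : ℝ :=
  ∑' i, (b i : ℝ) / q ^ (i + 1)

section ExpansionValue

variable {M : ℕ} {q : ℝ} {b c : ℕ → ℕ}

theorem summable_digit_div_pow (hq : 1 < q) (hb : ∀ i, b i ≤ M) :
    Summable (fun i => (b i : ℝ) / q ^ (i + 1)) := by
  have hgeo : Summable (fun i : ℕ => (M : ℝ) * (1 / q) ^ (i + 1)) :=
    ((summable_geometric_of_lt_one (by positivity)
      (by rw [div_lt_one (by positivity)]; exact hq)).mul_left _).comp_injective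
      (add_left_injective 1)
  refine hgeo.of_nonneg_of_le (fun i => by positivity) fun i => ?_
  rw [one_div, inv_pow, ← div_eq_mul_inv]
  gcongr
  exact_mod_cast hb i

theorem expansionValue_nonneg (hq : 0 ≤ q) : 0 ≤ expansionValue q b :=
  tsum_nonneg fun _ => by positivity

theorem expansionValue_pos (hq : 1 < q) (hb : ∀ i, b i ≤ M) (h : ∃ i, b i ≠ 0) :
    0 < expansionValue q b := by
  obtain ⟨i, hi⟩ := h
  have : 0 < b i := Nat.pos_of_ne_zero hi
  exact (summable_digit_div_pow hq hb).tsum_pos (fun _ => by positivity) i (by positivity)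

theorem expansionValue_mono (hq : 1 < q) (hc : ∀ i, c i ≤ M) (h : ∀ i, b i ≤ c i) :
    expansionValue q b ≤ expansionValue q c := by
  refine (summable_digit_div_pow hq fun i => (h i).trans (hc i)).tsum_le_tsum (fun i => ?_)
    (summable_digit_div_pow hq hc)
  gcongr
  exact_mod_cast h i

theorem expansionValue_eq_sum_add_shift (hq : 1 < q) (hb : ∀ i, b i ≤ M) (k : ℕ) :
    expansionValue q b = ∑ i ∈ range k, (b i : ℝ) / q ^ (i + 1)
      + expansionValue q (fun i => b (k + i)) / q ^ k := by
  rw [expansionValue, ← (summable_digit_div_pow hq hb).sum_add_tsum_nat_add k, expansionValue,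
    ← tsum_div_const]
  congr 1
  refine tsum_congr fun i => ?_
  rw [add_comm i k, add_assoc, pow_add, div_div, mul_comm]

theorem expansionValue_sub_le_of_lt (hq : 1 < q) (hb : ∀ i, b i ≤ M) (hc : ∀ i, c i ≤ M)
    {j : ℕ} (hpre : ∀ k < j, b k = c k) (hlt : b j < c j) :
    expansionValue q b - expansionValue q c
      ≤ (expansionValue q (fun i => b (j + 1 + i)) - 1) / q ^ (j + 1) := by
  have hq0 : 0 < q := one_pos.trans hq
  rw [expansionValue_eq_sum_add_shift hq hb (j + 1), expansionValue_eq_sum_add_shift hq hc (j + 1),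
    sum_range_succ, sum_range_succ, sum_congr rfl fun k hk => by rw [hpre k (mem_range.1 hk)]]
  have hdigit : (b j : ℝ) + 1 ≤ c j := by exact_mod_cast hlt
  have htail : 0 ≤ expansionValue q (fun i => c (j + 1 + i)) / q ^ (j + 1) :=
    div_nonneg (expansionValue_nonneg hq0.le) (by positivity)
  rw [sub_div]
  have : (b j : ℝ) / q ^ (j + 1) + 1 / q ^ (j + 1) ≤ c j / q ^ (j + 1) := by
    rw [← add_div]; gcongr
  linarith

end ExpansionValue

theorem nonpos_of_forall_pos_exists_le_mul {ι : Type*} {f : ι → ℝ} (hf : BddAbove (Set.range f))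
    {c : ℝ} (hc0 : 0 ≤ c) (hc1 : c < 1) (h : ∀ i, 0 < f i → ∃ j, f i ≤ c * f j) (i : ι) :
    f i ≤ 0 := by
  by_contra! hi
  have : Nonempty ι := ⟨i⟩
  have hS : 0 < ⨆ k, f k := hi.trans_le (le_ciSup hf i)
  have hle : ⨆ k, f k ≤ c * ⨆ k, f k := by
    refine ciSup_le fun k => ?_
    rcases le_or_gt (f k) 0 with hk | hk
    · exact hk.trans (by positivity)
    · obtain ⟨j, hj⟩ := h k hk
      exact hj.trans (mul_le_mul_of_nonneg_left (le_ciSup hf j) hc0)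
  nlinarith

theorem qgDigit_eq {M d n : ℕ} {q x s : ℝ} (hq : 0 < q) (hdM : d ≤ M)
    (hlt : s + d / q ^ (n + 1) < x) (hle : d < M → x ≤ s + (d + 1) / q ^ (n + 1)) :
    qgDigit M q x s n = d := by
  rw [qgDigit, Nat.findGreatest_eq_iff]
  refine ⟨hdM, fun _ => hlt, fun m hdm hmM => not_lt.2 ((hle (hdm.trans_le hmM)).trans ?_)⟩
  gcongr
  exact_mod_cast hdm

theorem quasiGreedy_eq_of_qgDigit_eq {M : ℕ} {q x : ℝ} {a : ℕ → ℕ}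
    (h : ∀ n, qgDigit M q x (∑ i ∈ range n, (a i : ℝ) / q ^ (i + 1)) n = a n) :
    quasiGreedy M q x = a := by
  have hsum : ∀ n, qgSum M q x n = ∑ i ∈ range n, (a i : ℝ) / q ^ (i + 1) := by
    intro n
    induction n with
    | zero => simp [qgSum]
    | succ n ih => rw [qgSum, ih, h n, sum_range_succ]
  funext n
  rw [quasiGreedy, hsum, h]

theorem expansionValue_tail_le_one {M : ℕ} {q : ℝ} (hq : 1 < q)
    {α : ℕ → ℕ} (hαM : ∀ i, α i ≤ M) (hα1 : expansionValue q α = 1)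
    {a : ℕ → ℕ} (haM : ∀ i, a i ≤ M)
    (ha : ∀ n, a n < M → LexLe (fun i => a (n + 1 + i)) α) {n : ℕ} (hn : a n < M) :
    expansionValue q (fun i => a (n + 1 + i)) ≤ 1 := by
  have hq0 : 0 < q := one_pos.trans hq
  let excess : {n // a n < M} → ℝ := fun n => expansionValue q (fun i => a (n.1 + 1 + i)) - 1
  have hbdd : BddAbove (Set.range excess) := by
    refine ⟨expansionValue q (fun _ => M) - 1, ?_⟩
    rintro _ ⟨m, rfl⟩
    exact sub_le_sub_right (expansionValue_mono hq (fun _ => le_rfl) fun i => haM _) 1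
  suffices excess ⟨n, hn⟩ ≤ 0 by simpa [excess] using this
  refine nonpos_of_forall_pos_exists_le_mul hbdd (by positivity) ((div_lt_one hq0).2 hq)
    (fun ⟨m, hm⟩ hpos => ?_) _
  rcases ha m hm with ⟨j, hpre, hlt⟩ | heq
  · refine ⟨⟨m + 1 + j, hlt.trans_le (hαM j)⟩, ?_⟩
    have hstep := expansionValue_sub_le_of_lt hq (fun i => haM _) hαM hpre hlt
    simp only [hα1, ← add_assoc] at hstep
    simp only [excess] at hpos ⊢
    have hnext : 0 < expansionValue q (fun i => a (m + 1 + j + 1 + i)) - 1 :=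
      pos_of_mul_pos_left (hpos.trans_le hstep) (by positivity)
    refine hstep.trans ?_
    rw [one_div_mul_eq_div]
    exact div_le_div_of_nonneg_left hnext.le hq0 (le_self_pow₀ hq.le (Nat.succ_ne_zero j))
  · simp [excess, heq, hα1] at hpos

theorem eq_quasiGreedy_of_lex_le_general (M : ℕ) (q : ℝ) (hq : 1 < q)
    (α : ℕ → ℕ) (hαM : ∀ i, α i ≤ M) (hα1 : ∑' i, (α i : ℝ) / q ^ (i + 1) = 1)
    (a : ℕ → ℕ) (haM : ∀ i, a i ≤ M) (hainf : {n | a n ≠ 0}.Infinite)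
    (ha : ∀ n, a n < M → LexLe (fun i => a (n + 1 + i)) α) :
    a = quasiGreedy M q (∑' i, (a i : ℝ) / q ^ (i + 1)) := by
  have hq0 : 0 < q := one_pos.trans hq
  refine (quasiGreedy_eq_of_qgDigit_eq fun n => qgDigit_eq hq0 (haM n) ?_ ?_).symm
  all_goals
    rw [← expansionValue, expansionValue_eq_sum_add_shift hq haM (n + 1), sum_range_succ]
  · have htail : 0 < expansionValue q (fun i => a (n + 1 + i)) := by
      obtain ⟨k, hk, hnk⟩ := hainf.exists_gt n
      exact expansionValue_pos hq (fun _ => haM _) ⟨k - (n + 1), by rwa [Nat.add_sub_cancel' hnk]⟩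
    have : 0 < expansionValue q (fun i => a (n + 1 + i)) / q ^ (n + 1) := by positivity
    linarith
  · intro hn
    have := expansionValue_tail_le_one hq hαM hα1 haM ha hn
    rw [add_div, add_assoc]
    gcongr

/-- Lemma 2.3, second part: if `(α_i)` is an expansion of `1` and the infinite sequence
`(a_i)` satisfies `a_{n+1}a_{n+2}… ≤ α_1α_2…` whenever `a_n < M`, then `(a_i)` is the
quasi-greedy expansion of `x := ∑ a_i q^{-i}`. -/
theorem eq_quasiGreedy_of_lex_le (M : ℕ) (hM : 0 < M) (q : ℝ) (hq : 1 < q)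
    (α : ℕ → ℕ) (hαM : ∀ i, α i ≤ M) (hα1 : ∑' i, (α i : ℝ) / q ^ (i + 1) = 1)
    (a : ℕ → ℕ) (haM : ∀ i, a i ≤ M) (hainf : {n | a n ≠ 0}.Infinite)
    (ha : ∀ n, a n < M → LexLe (fun i => a (n + 1 + i)) α) :
    a = quasiGreedy M q (∑' i, (a i : ℝ) / q ^ (i + 1)) :=
  eq_quasiGreedy_of_lex_le_general M q hq α hαM hα1 a haM hainf ha
end

section
/- Let M be a positive integer and q > 1 a real number. If a sequence (β_i) with digits in {0,...,M} is an expansion of 1 (i.e., Σ β_i q^{−i} = 1) and satisfies β_{n+1}β_{n+2}... < β_1β_2... (strict lexicographic inequality) whenever β_n < M, then (β_i) is the greedy expansion of 1, i.e., it is the lexicographically largest sequence (c_i) with digits in {0,...,M} satisfying Σ c_i q^{−i} ≤ 1. -/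
/-!
Write `T k` for the value `∑ᵢ β (k + i) q^{-(i+1)}` of the tail of `β` from position `k`.
The heart of the matter is that `T (n + 1) < 1` whenever `β n < M`; given this, a sequence `c`
lexicographically above `β` is larger at the first digit where they differ, and that extra
`q^{-(n+1)}` outweighs the whole tail of `β`, so `∑ c_i q^{-(i+1)} > 1`.

Suppose `T (n + 1) ≥ 1` with `β n < M`. The tail of `β` after `n` agrees with `β` on `m` digits and
is smaller at digit `m`; shifting by `m + 1` digits multiplies the excess `T (n + 1) - 1` by
`q^(m+1)` and produces an index `n' = n + m + 1` with `β n' < M` and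
`T (n' + 1) - 1 ≥ q (T (n + 1) - 1) + T (m + 1)`, where `T (m + 1) > 0` because `m < n'` and
`T (n' + 1) ≥ 1`. Iterating, the excesses grow geometrically, which contradicts
`T ≤ M / (q - 1)`.
-/

lemma hasSum_div_pow_succ {q : ℝ} (hq : 1 < q) (a : ℝ) :
    HasSum (fun i : ℕ => a / q ^ (i + 1)) (a / (q - 1)) := by
  have hq0 : 0 < q := one_pos.trans hq
  have hq1 : q - 1 ≠ 0 := (sub_pos.2 hq).ne'
  have h := (hasSum_geometric_of_lt_one (inv_nonneg.2 hq0.le) (inv_lt_one_of_one_lt₀ hq)).mul_left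
    (a / q)
  have hterm : (fun i : ℕ => a / q * q⁻¹ ^ i) = fun i => a / q ^ (i + 1) := by
    ext i; rw [inv_pow, pow_succ']; field_simp
  have hsum : a / q * (1 - q⁻¹)⁻¹ = a / (q - 1) := by field_simp
  rwa [hterm, hsum] at h

noncomputable def tailValue (q : ℝ) (c : ℕ → ℕ) (k : ℕ) : ℝ :=
  ∑' i, (c (k + i) : ℝ) / q ^ (i + 1)

section
variable {q : ℝ} {M : ℕ} {c : ℕ → ℕ}

lemma tailValue_nonneg (hq : 0 ≤ q) (k : ℕ) : 0 ≤ tailValue q c k :=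
  tsum_nonneg fun _ => by positivity

lemma digit_div_pow_succ_le (hq : 1 < q) (hc : ∀ i, c i ≤ M) (k i : ℕ) :
    (c (k + i) : ℝ) / q ^ (i + 1) ≤ M / q ^ (i + 1) := by
  gcongr; exact_mod_cast hc _

lemma summable_tailValue (hq : 1 < q) (hc : ∀ i, c i ≤ M) (k : ℕ) :
    Summable fun i => (c (k + i) : ℝ) / q ^ (i + 1) :=
  (hasSum_div_pow_succ hq M).summable.of_nonneg_of_le (fun _ => by positivity)
    (digit_div_pow_succ_le hq hc k)

lemma tailValue_le (hq : 1 < q) (hc : ∀ i, c i ≤ M) (k : ℕ) : tailValue q c k ≤ M / (q - 1) :=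
  hasSum_le (digit_div_pow_succ_le hq hc k) (summable_tailValue hq hc k).hasSum
    (hasSum_div_pow_succ hq M)

lemma mul_tailValue (hq : 1 < q) (hc : ∀ i, c i ≤ M) (k : ℕ) :
    q * tailValue q c k = c k + tailValue q c (k + 1) := by
  rw [tailValue, (summable_tailValue hq hc k).tsum_eq_zero_add, mul_add, tailValue,
    ← tsum_mul_left]
  congr 1
  · field_simp; simp
  · refine tsum_congr fun i => ?_
    rw [show k + (i + 1) = k + 1 + i by omega, pow_succ q (i + 1)]
    field_simp

lemma tailValue_add_le (hq : 1 < q) (hc : ∀ i, c i ≤ M) (k N : ℕ) :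
    tailValue q c (k + N) ≤ q ^ N * tailValue q c k := by
  induction N with
  | zero => simp
  | succ N ih =>
    have hrec := mul_tailValue hq hc (k + N)
    have hcN : (0 : ℝ) ≤ c (k + N) := Nat.cast_nonneg _
    calc tailValue q c (k + (N + 1)) ≤ q * tailValue q c (k + N) := by
          rw [← add_assoc]; linarith
      _ ≤ q * (q ^ N * tailValue q c k) := by gcongr
      _ = q ^ (N + 1) * tailValue q c k := by ring

lemma tailValue_pos_of_le (hq : 1 < q) (hc : ∀ i, c i ≤ M) {j k : ℕ} (hjk : j ≤ k)
    (h : 0 < tailValue q c k) : 0 < tailValue q c j := by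
  obtain ⟨N, rfl⟩ := Nat.exists_eq_add_of_le hjk
  exact pos_of_mul_pos_right (h.trans_le (tailValue_add_le hq hc j N)) (by positivity)

lemma pow_mul_tailValue_sub {a b : ℕ → ℕ} (hq : 1 < q) (ha : ∀ i, a i ≤ M) (hb : ∀ i, b i ≤ M)
    {j k m : ℕ} (hab : ∀ i < m, a (j + i) = b (k + i)) :
    q ^ m * (tailValue q a j - tailValue q b k) =
      tailValue q a (j + m) - tailValue q b (k + m) := by
  induction m with
  | zero => simp
  | succ m ih =>
    rw [pow_succ', mul_assoc, ih fun i hi => hab i (by omega), mul_sub, mul_tailValue hq ha,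
      mul_tailValue hq hb, hab m m.lt_succ_self, ← add_assoc, ← add_assoc]
    ring
end

lemma nonpos_of_forall_exists_mul_le {ι : Type*} {f : ι → ℝ} {q : ℝ} (hq : 1 < q)
    (hf : BddAbove (Set.range f)) (h : ∀ i, 0 < f i → ∃ j, q * f i ≤ f j) (i : ι) : f i ≤ 0 := by
  by_contra! hi
  have hgrow : ∀ k : ℕ, ∃ j, q ^ k * f i ≤ f j := by
    intro k
    induction k with
    | zero => exact ⟨i, by simp⟩
    | succ k ih =>
      obtain ⟨j, hj⟩ := ih
      have hj_pos : 0 < f j := (mul_pos (by positivity) hi).trans_le hj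
      obtain ⟨j', hj'⟩ := h j hj_pos
      refine ⟨j', ?_⟩
      calc q ^ (k + 1) * f i = q * (q ^ k * f i) := by ring
        _ ≤ q * f j := by gcongr
        _ ≤ f j' := hj'
  obtain ⟨B, hB⟩ := hf
  obtain ⟨k, hk⟩ := pow_unbounded_of_one_lt (B / f i) hq
  obtain ⟨j, hj⟩ := hgrow k
  have hjB : f j ≤ B := hB ⟨j, rfl⟩
  rw [div_lt_iff₀ hi] at hk
  linarith

section
variable {q : ℝ} {M : ℕ} {β : ℕ → ℕ}

lemma exists_tailValue_sub_one_ge (hq : 1 < q) (hβM : ∀ i, β i ≤ M) (hβ1 : tailValue q β 0 = 1)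
    (hβ : ∀ n, β n < M → LexLt (fun i => β (n + 1 + i)) β) {n : ℕ} (hn : β n < M)
    (h1 : 1 ≤ tailValue q β (n + 1)) :
    ∃ n', β n' < M ∧ 0 < tailValue q β (n' + 1) - 1 ∧
      q * (tailValue q β (n + 1) - 1) ≤ tailValue q β (n' + 1) - 1 := by
  obtain ⟨m, hagree, hlt⟩ := hβ n hn
  have hshift := pow_mul_tailValue_sub (j := n + 1) (k := 0) hq hβM hβM
    fun i hi => by simpa using hagree i hi
  rw [hβ1, zero_add] at hshift
  have hrec := mul_tailValue hq hβM (n + 1 + m)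
  have hrec₀ := mul_tailValue hq hβM m
  have hdigit : (β (n + 1 + m) : ℝ) + 1 ≤ β m := by exact_mod_cast hlt
  have hgrow : q * (tailValue q β (n + 1) - 1) + tailValue q β (m + 1) ≤
      tailValue q β (n + 1 + m + 1) - 1 := by
    have : q * (tailValue q β (n + 1) - 1) ≤ q * (tailValue q β (n + 1 + m) - tailValue q β m) :=
      calc q * (tailValue q β (n + 1) - 1) ≤ q ^ (m + 1) * (tailValue q β (n + 1) - 1) :=
            mul_le_mul_of_nonneg_right (le_self_pow₀ hq.le (by omega)) (by linarith)
        _ = _ := by rw [pow_succ', mul_assoc, hshift]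
    linarith
  have hexcess : 0 ≤ q * (tailValue q β (n + 1) - 1) := mul_nonneg (by linarith) (by linarith)
  have hpos : 0 < tailValue q β (m + 1) := by
    refine tailValue_pos_of_le hq hβM (k := n + 1 + m + 1) (by omega) ?_
    linarith [tailValue_nonneg (c := β) (zero_le_one.trans hq.le) (m + 1)]
  exact ⟨n + 1 + m, hlt.trans_le (hβM m), by linarith, by linarith⟩

lemma tailValue_succ_lt_one (hq : 1 < q) (hβM : ∀ i, β i ≤ M) (hβ1 : tailValue q β 0 = 1)
    (hβ : ∀ n, β n < M → LexLt (fun i => β (n + 1 + i)) β) {n : ℕ} (hn : β n < M) :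
    tailValue q β (n + 1) < 1 := by
  by_contra! h1
  obtain ⟨n', hn', hpos, -⟩ := exists_tailValue_sub_one_ge hq hβM hβ1 hβ hn h1
  let f : {n // β n < M} → ℝ := fun n => tailValue q β (n.1 + 1) - 1
  have hbdd : BddAbove (Set.range f) := by
    refine ⟨M / (q - 1) - 1, ?_⟩
    rintro _ ⟨n, rfl⟩
    linarith [tailValue_le hq hβM (n.1 + 1)]
  have hstep : ∀ n, 0 < f n → ∃ n', q * f n ≤ f n' := by
    rintro ⟨n, hn⟩ hpos
    obtain ⟨n', hn', -, hle⟩ := exists_tailValue_sub_one_ge hq hβM hβ1 hβ hn (by linarith)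
    exact ⟨⟨n', hn'⟩, hle⟩
  exact (nonpos_of_forall_exists_mul_le hq hbdd hstep ⟨n', hn'⟩).not_gt hpos
end

lemma tailValue_zero_lt_of_lt {q : ℝ} {M : ℕ} {a b : ℕ → ℕ} (hq : 1 < q) (ha : ∀ i, a i ≤ M)
    (hb : ∀ i, b i ≤ M) {n : ℕ} (hab : ∀ k < n, a k = b k) (hn : a n < b n)
    (ha1 : tailValue q a (n + 1) < 1) : tailValue q a 0 < tailValue q b 0 := by
  have hshift := pow_mul_tailValue_sub (j := 0) (k := 0) hq ha hb
    fun i hi => by simpa using hab i hi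
  simp only [zero_add] at hshift
  have hreca := mul_tailValue hq ha n
  have hrecb := mul_tailValue hq hb n
  have hdigit : (a n : ℝ) + 1 ≤ b n := by exact_mod_cast hn
  have hb1 := tailValue_nonneg (c := b) (zero_le_one.trans hq.le) (n + 1)
  by_contra! hle
  have hprod : 0 ≤ q * (q ^ n * (tailValue q a 0 - tailValue q b 0)) :=
    mul_nonneg (by positivity) (mul_nonneg (by positivity) (sub_nonneg.2 hle))
  rw [hshift] at hprod
  linarith

lemma lexLt_or_lexLt_of_ne {a b : ℕ → ℕ} (h : a ≠ b) : LexLt a b ∨ LexLt b a := by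
  classical
  have hex : ∃ n, a n ≠ b n := Function.ne_iff.1 h
  have hmin : ∀ k < Nat.find hex, a k = b k := fun k hk => not_not.1 (Nat.find_min hex hk)
  rcases (Nat.find_spec hex).lt_or_gt with hlt | hgt
  · exact .inl ⟨_, hmin, hlt⟩
  · exact .inr ⟨_, fun k hk => (hmin k hk).symm, hgt⟩

theorem eq_greedy_of_lex_lt_general (M : ℕ) (q : ℝ) (hq : 1 < q)
    (β : ℕ → ℕ) (hβM : ∀ i, β i ≤ M) (hβ1 : ∑' i, (β i : ℝ) / q ^ (i + 1) = 1)
    (hβ : ∀ n, β n < M → LexLt (fun i => β (n + 1 + i)) β) :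
    ∀ c : ℕ → ℕ, (∀ i, c i ≤ M) → (∑' i, (c i : ℝ) / q ^ (i + 1)) ≤ 1 →
      LexLe c β := by
  intro c hcM hc1
  by_cases hcβ : c = β
  · exact .inr hcβ
  rcases lexLt_or_lexLt_of_ne hcβ with hlt | ⟨n, hagree, hn⟩
  · exact .inl hlt
  have hβ1' : tailValue q β 0 = 1 := by simpa [tailValue] using hβ1
  have hc1' : tailValue q c 0 ≤ 1 := by simpa [tailValue] using hc1
  have hβc := tailValue_zero_lt_of_lt hq hβM hcM hagree hn
    (tailValue_succ_lt_one hq hβM hβ1' hβ (hn.trans_le (hcM n)))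
  linarith

/-- Lemma 3.3: if an expansion `(β_i)` of `1` satisfies `β_{n+1}β_{n+2}… < β_1β_2…`
whenever `β_n < M`, then it is the greedy expansion of `1`, i.e. the lexicographically
largest sequence `(c_i)` with digits in `{0,…,M}` satisfying `∑ c_i q^{-i} ≤ 1`. -/
theorem eq_greedy_of_lex_lt (M : ℕ) (hM : 0 < M) (q : ℝ) (hq : 1 < q)
    (β : ℕ → ℕ) (hβM : ∀ i, β i ≤ M) (hβ1 : ∑' i, (β i : ℝ) / q ^ (i + 1) = 1)
    (hβ : ∀ n, β n < M → LexLt (fun i => β (n + 1 + i)) β) :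
    ∀ c : ℕ → ℕ, (∀ i, c i ≤ M) → (∑' i, (c i : ℝ) / q ^ (i + 1)) ≤ 1 →
      LexLe c β :=
  eq_greedy_of_lex_lt_general M q hq β hβM hβ1 hβ
end
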